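/- arXiv:2402.03237 — 2 statements merged into one kernel-verified Lean document; each statement's English description precedes it below -/
import Mathlib

section
/- Let (x_j)_{j∈J} be a finite frame of a finite-dimensional real inner product space H and let λ_c be the infimum of all λ>0 such that (x_j)_{j∈J} does λ-saturation recovery on the closed unit ball B_H. Then the set of x∈H with ‖x‖≤1 such that (x_j)_{j∈J_{λ_c}^♯(x)} is not a frame of H is finite; moreover its cardinality is at most 3^{|J|}. -/
/-!
Call a point `x` of the unit ball a failure if its unsaturated frame vectors (those with
`|⟪x, xⱼ⟫| < λ_c`) do not span `H`, and record for each `j` whether `⟪x, xⱼ⟫` lies in `(-∞, -λ_c]`,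
`(-λ_c, λ_c)` or `[λ_c, ∞)`. Two distinct failures `x ≠ y` with the same record cannot exist: by
strict convexity their midpoint `m` has `‖m‖ < r < 1` for some `r`, and every coefficient of
`p = m / r` that is saturated for `x` exceeds `λ_c / r` in absolute value. Pick `λ_c < λ < λ_c / r`
and a vector `v ≠ 0` orthogonal to the unsaturated frame vectors of `x`; then `p` and `p + t v`
(for small `t ≠ 0`) lie in the ball and have the same `λ`-saturated coefficients, although
recovery holds at every level above `λ_c`. So the failures inject into `3 ^ |J|` sign records.
This needs `λ_c > 0`: at a level `λ` of recovery, a unit vector `x` and `x / 2` must differ in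
some saturated coefficient, which forces `0 < |⟪x, xⱼ⟫| < 2 λ` for some `j`.
-/

local notation "⟪" x ", " y "⟫" => @inner ℝ _ _ x y

/-- The saturation function `φ_λ`: `φ_λ(t) = t` if `|t| ≤ λ` and `φ_λ(t) = sign(t)·λ` else. -/
noncomputable def satur (l t : ℝ) : ℝ := max (-l) (min l t)

open Filter Topology Metric

lemma satur_of_abs_le {l t : ℝ} (h : |t| ≤ l) : satur l t = t := by
  unfold satur; grind [abs_le]

lemma satur_satur {l l' : ℝ} (t : ℝ) (h : l ≤ l') :
    satur l (satur l' t) = satur l t := by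
  unfold satur; grind

lemma satur_eventually_eq {l t : ℝ} (h : l < |t|) : ∀ᶠ s in 𝓝 t, satur l s = satur l t := by
  rcases lt_abs.1 h with h | h
  · filter_upwards [eventually_gt_nhds h] with s hs
    unfold satur; grind
  · filter_upwards [eventually_lt_nhds (lt_neg.1 h)] with s hs
    unfold satur; grind

/-- The boundary case `|t| = l` counts as saturated, matching the strict inequality in `J♯`. -/
noncomputable def saturationSign (l t : ℝ) : SignType :=
  if l ≤ t then 1 else if t ≤ -l then -1 else 0

lemma two_mul_le_abs_add_of_saturationSign_eq {l a b : ℝ}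
    (h : saturationSign l a = saturationSign l b) (ha : l ≤ |a|) : 2 * l ≤ |a + b| := by
  unfold saturationSign at h
  split_ifs at h <;> grind [abs_le, le_abs]

lemma exists_pos_le_abs_of_ne_zero {ι : Type*} [Finite ι] (f : ι → ℝ) :
    ∃ ε > 0, ∀ i, f i ≠ 0 → ε ≤ |f i| := by
  have : ∀ᶠ ε in 𝓝[>] (0 : ℝ), ∀ i, f i ≠ 0 → ε ≤ |f i| :=
    eventually_all.2 fun i => by
      by_cases hi : f i = 0
      · simp [hi]
      · exact nhdsWithin_le_nhds <| (eventually_lt_nhds (abs_pos.2 hi)).mono fun _ h _ => h.le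
  exact (this.and self_mem_nhdsWithin).exists.imp fun ε h => ⟨h.2, h.1⟩

section InnerProductSpace

variable {E : Type*} [NormedAddCommGroup E] [InnerProductSpace ℝ E]

lemma exists_ne_zero_inner_eq_zero_of_span_ne_top {s : Set E} (hs : s.Finite)
    (h : Submodule.span ℝ s ≠ ⊤) : ∃ v ≠ 0, ∀ u ∈ s, ⟪v, u⟫ = 0 := by
  have := FiniteDimensional.span_of_finite ℝ hs
  obtain ⟨v, hv, hv0⟩ := (Submodule.ne_bot_iff _).1 (mt Submodule.orthogonal_eq_bot_iff.1 h)
  exact ⟨v, hv0, fun u hu =>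
    real_inner_comm u v ▸ (Submodule.mem_orthogonal _ v).1 hv u (Submodule.subset_span hu)⟩

lemma eq_of_forall_inner_eq_of_span_eq_top {ι : Type*} {xv : ι → E}
    (hspan : Submodule.span ℝ (Set.range xv) = ⊤) {x y : E} (h : ∀ i, ⟪x, xv i⟫ = ⟪y, xv i⟫) :
    x = y := by
  have : Submodule.span ℝ {x - y} ⟂ Submodule.span ℝ (Set.range xv) := by
    refine Submodule.isOrtho_span.2 ?_
    rintro _ rfl _ ⟨i, rfl⟩
    rw [inner_sub_left, h, sub_self]
  rwa [hspan, Submodule.isOrtho_top_right, Submodule.span_singleton_eq_bot, sub_eq_zero] at this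

end InnerProductSpace

section SaturationRecovery

variable {H J : Type*} [NormedAddCommGroup H] [InnerProductSpace ℝ H] (xv : J → H)

def saturationLevels : Set ℝ :=
  {l | 0 < l ∧ Set.InjOn (fun x : H => fun j : J => satur l ⟪x, xv j⟫) (closedBall (0 : H) 1)}

def failureSet (l : ℝ) : Set H :=
  {x | ‖x‖ ≤ 1 ∧ Submodule.span ℝ (xv '' {j | |⟪x, xv j⟫| < l}) ≠ ⊤}

variable {xv}

lemma mem_saturationLevels_of_le {l l' : ℝ} (hl : l ∈ saturationLevels xv) (h : l ≤ l') :
    l' ∈ saturationLevels xv := by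
  refine ⟨hl.1.trans_le h, fun x hx y hy hxy => hl.2 hx hy (funext fun j => ?_)⟩
  simpa only [satur_satur _ h] using congrArg (satur l) (congrFun hxy j)

lemma mem_saturationLevels_of_forall_norm_le (hspan : Submodule.span ℝ (Set.range xv) = ⊤)
    {l : ℝ} (hl : 0 < l) (hxv : ∀ j, ‖xv j‖ ≤ l) : l ∈ saturationLevels xv := by
  refine ⟨hl, fun x hx y hy hxy => eq_of_forall_inner_eq_of_span_eq_top hspan fun j => ?_⟩
  have hsmall : ∀ z ∈ closedBall (0 : H) 1, |⟪z, xv j⟫| ≤ l := fun z hz =>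
    (abs_real_inner_le_norm z (xv j)).trans <| by
      simpa using mul_le_mul (mem_closedBall_zero_iff.1 hz) (hxv j) (norm_nonneg _) zero_le_one
  simpa only [satur_of_abs_le (hsmall x hx), satur_of_abs_le (hsmall y hy)] using congrFun hxy j

lemma saturationLevels_nonempty [Finite J] (hspan : Submodule.span ℝ (Set.range xv) = ⊤) :
    (saturationLevels xv).Nonempty := by
  obtain ⟨C, hC⟩ := (Set.finite_range fun j => ‖xv j‖).bddAbove
  exact ⟨max C 1, mem_saturationLevels_of_forall_norm_le hspan (by positivity)
    fun j => (hC ⟨j, rfl⟩).trans (le_max_left C 1)⟩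

lemma exists_abs_inner_lt_of_mem_saturationLevels {l : ℝ} (hl : l ∈ saturationLevels xv) {x : H}
    (hx : ‖x‖ = 1) : ∃ j, ⟪x, xv j⟫ ≠ 0 ∧ |⟪x, xv j⟫| < 2 * l := by
  by_contra! hbig
  have hhalf : x = (2⁻¹ : ℝ) • x := by
    refine hl.2 (by simp [hx]) (by norm_num [norm_smul, hx]) (funext fun j => ?_)
    simp only [real_inner_smul_left]
    by_cases h0 : ⟪x, xv j⟫ = 0
    · simp [h0]
    · have hl0 := hl.1
      unfold satur
      rcases le_abs'.1 (hbig j h0) with h | h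
      · rw [max_eq_left (by linarith [min_le_right l ⟪x, xv j⟫]),
          max_eq_left (by linarith [min_le_right l (2⁻¹ * ⟪x, xv j⟫)])]
      · rw [min_eq_left (by linarith), min_eq_left (by linarith)]
  have := congrArg norm hhalf
  norm_num [norm_smul, hx] at this

lemma exists_pos_mem_lowerBounds_saturationLevels [Finite J] [Nontrivial H] :
    ∃ b > 0, b ∈ lowerBounds (saturationLevels xv) := by
  obtain ⟨x, hx⟩ := exists_norm_eq H zero_le_one
  obtain ⟨ε, hε, hεle⟩ := exists_pos_le_abs_of_ne_zero fun j => ⟪x, xv j⟫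
  refine ⟨ε / 2, half_pos hε, fun l hl => ?_⟩
  obtain ⟨j, hj0, hjl⟩ := exists_abs_inner_lt_of_mem_saturationLevels hl hx
  linarith [hεle j hj0]

lemma notMem_saturationLevels_of_perturbation [Finite J] {l : ℝ} {p v : H} (hp : ‖p‖ < 1)
    (hv : v ≠ 0) (hpv : ∀ j, ⟪v, xv j⟫ = 0 ∨ l < |⟪p, xv j⟫|) : l ∉ saturationLevels xv := by
  rintro ⟨-, hinj⟩
  have hcurve (j : J) : Continuous fun t : ℝ => ⟪p + t • v, xv j⟫ := by fun_prop
  have hnear : ∀ᶠ t : ℝ in 𝓝 0,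
      ‖p + t • v‖ < 1 ∧ ∀ j, satur l ⟪p + t • v, xv j⟫ = satur l ⟪p, xv j⟫ := by
    refine ((Continuous.tendsto' (by fun_prop) 0 _ (by simp)).eventually_lt_const hp).and
      (eventually_all.2 fun j => ?_)
    rcases hpv j with hvj | hlt
    · exact Eventually.of_forall fun t => by simp [inner_add_left, real_inner_smul_left, hvj]
    · exact ((hcurve j).tendsto' 0 _ (by simp)).eventually (satur_eventually_eq hlt)
  obtain ⟨t, ⟨hball, hsat⟩, ht⟩ := ((hnear.filter_mono nhdsWithin_le_nhds).and self_mem_nhdsWithin :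
    ∀ᶠ t in 𝓝[≠] (0 : ℝ), _).exists
  refine smul_ne_zero ht hv (add_eq_left.1 (hinj ?_ ?_ (funext hsat)))
  · simpa using hball.le
  · simpa using hp.le

lemma injOn_saturationSign_failureSet [Finite J] {l : ℝ} (hl : 0 < l)
    (habove : ∀ l' > l, l' ∈ saturationLevels xv) :
    Set.InjOn (fun x j => saturationSign l ⟪x, xv j⟫) (failureSet xv l) := by
  intro x hx y hy hsign
  by_contra hxy
  obtain ⟨v, hv0, hv⟩ := exists_ne_zero_inner_eq_zero_of_span_ne_top
    ((Set.toFinite _).image xv) hx.2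
  set m : H := (2⁻¹ : ℝ) • x + (2⁻¹ : ℝ) • y
  have hm : ‖m‖ < 1 := norm_combo_lt_of_ne hx.1 hy.1 hxy (by norm_num) (by norm_num) (by norm_num)
  obtain ⟨r, hmr, hr1⟩ := exists_between hm
  have hr0 : 0 < r := (norm_nonneg m).trans_lt hmr
  obtain ⟨l', hll', hl'r⟩ :=
    exists_between ((lt_div_iff₀ hr0).2 (mul_lt_of_lt_one_right hl hr1))
  refine notMem_saturationLevels_of_perturbation (p := r⁻¹ • m) ?_ hv0 (fun j => ?_)
    (habove l' hll')
  · rwa [norm_smul, Real.norm_of_nonneg (inv_nonneg.2 hr0.le), inv_mul_lt_one₀ hr0]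
  by_cases hj : |⟪x, xv j⟫| < l
  · exact .inl (hv _ ⟨j, hj, rfl⟩)
  · refine .inr (hl'r.trans_le ?_)
    have := two_mul_le_abs_add_of_saturationSign_eq (congrFun hsign j) (not_lt.1 hj)
    calc l / r ≤ 2⁻¹ * |⟪x, xv j⟫ + ⟪y, xv j⟫| / r := by gcongr; linarith
      _ = |⟪r⁻¹ • m, xv j⟫| := by
        simp only [m, real_inner_smul_left, inner_add_left, ← mul_add, abs_mul, abs_inv,
          abs_of_pos hr0, abs_two]
        ring

lemma sInf_saturationLevels_pos [Finite J] [Nontrivial H]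
    (hspan : Submodule.span ℝ (Set.range xv) = ⊤) : 0 < sInf (saturationLevels xv) := by
  obtain ⟨b, hb, hlow⟩ := exists_pos_mem_lowerBounds_saturationLevels (xv := xv)
  exact hb.trans_le (le_csInf (saturationLevels_nonempty hspan) hlow)

lemma mem_saturationLevels_of_sInf_lt [Finite J] (hspan : Submodule.span ℝ (Set.range xv) = ⊤)
    {l : ℝ} (h : sInf (saturationLevels xv) < l) : l ∈ saturationLevels xv := by
  obtain ⟨l₀, hl₀, hlt⟩ := exists_lt_of_csInf_lt (saturationLevels_nonempty hspan) h
  exact mem_saturationLevels_of_le hl₀ hlt.le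

end SaturationRecovery

theorem finitely_many_failures_at_critical_level_general
    {H : Type*} [NormedAddCommGroup H] [InnerProductSpace ℝ H]
    {J : Type*} [Fintype J] (xv : J → H)
    (hframe : Submodule.span ℝ (Set.range xv) = ⊤)
    (lamc : ℝ)
    (hlamc : lamc = sInf {l : ℝ | 0 < l ∧ Set.InjOn
      (fun x : H => fun j : J => satur l ⟪x, xv j⟫) (Metric.closedBall (0 : H) 1)}) :
    {x : H | ‖x‖ ≤ 1 ∧
        Submodule.span ℝ (xv '' {j : J | |⟪x, xv j⟫| < lamc}) ≠ ⊤}.Finite ∧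
      {x : H | ‖x‖ ≤ 1 ∧
        Submodule.span ℝ (xv '' {j : J | |⟪x, xv j⟫| < lamc}) ≠ ⊤}.ncard ≤
          3 ^ Fintype.card J := by
  have hinj : Set.InjOn (fun x j => saturationSign lamc ⟪x, xv j⟫) (failureSet xv lamc) := by
    rcases subsingleton_or_nontrivial H with hH | hH
    · exact fun x _ y _ _ => Subsingleton.elim x y
    · change lamc = sInf (saturationLevels xv) at hlamc
      subst hlamc
      exact injOn_saturationSign_failureSet (sInf_saturationLevels_pos hframe)
        fun l hl => mem_saturationLevels_of_sInf_lt hframe hl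
  refine ⟨(Set.toFinite _).of_finite_image hinj, ?_⟩
  calc (failureSet xv lamc).ncard = (_ '' failureSet xv lamc).ncard := hinj.ncard_image.symm
    _ ≤ Nat.card (J → SignType) := Set.ncard_le_card _
    _ = 3 ^ Fintype.card J := by simp only [Nat.card_fun, Nat.card_eq_fintype_card]; rfl

theorem finitely_many_failures_at_critical_level
    {H : Type*} [NormedAddCommGroup H] [InnerProductSpace ℝ H] [FiniteDimensional ℝ H]
    {J : Type*} [Fintype J] (xv : J → H)
    (hframe : Submodule.span ℝ (Set.range xv) = ⊤)
    (lamc : ℝ)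
    (hlamc : lamc = sInf {l : ℝ | 0 < l ∧ Set.InjOn
      (fun x : H => fun j : J => satur l ⟪x, xv j⟫) (Metric.closedBall (0 : H) 1)}) :
    {x : H | ‖x‖ ≤ 1 ∧
        Submodule.span ℝ (xv '' {j : J | |⟪x, xv j⟫| < lamc}) ≠ ⊤}.Finite ∧
      {x : H | ‖x‖ ≤ 1 ∧
        Submodule.span ℝ (xv '' {j : J | |⟪x, xv j⟫| < lamc}) ≠ ⊤}.ncard ≤
          3 ^ Fintype.card J :=
  finitely_many_failures_at_critical_level_general xv hframe lamc hlamc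
end

section
/- Let (x_j)_{j=1}^{n+1} be a family of unit vectors in ℝ^n which is full spark, and let α = max_{i≠j} |⟨x_i,x_j⟩|. Then the critical saturation level λ_c, i.e., the infimum of all λ>0 such that (x_j)_{j=1}^{n+1} does λ-saturation recovery on the closed unit ball of ℝ^n, equals 2^{−1/2}(1+α)^{1/2}. -/
local notation "⟪" x ", " y "⟫" => @inner ℝ _ _ x y

/-!
For `λ > μ := √((1 + α) / 2)`: if `y ≠ z` have equal saturated measurements, full spark forces
`⟪y - z, x_i⟫ ≠ 0` for two indices `i ≠ j`, so both measurements `i, j` of `y` are saturated,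
say `λ ≤ ⟪y, ±x_i⟫` and `λ ≤ ⟪y, ±x_j⟫`. Hence `2λ ≤ ‖±x_i ± x_j‖ ≤ √(2 + 2α) = 2μ`.

For `λ < μ`, pick `i ≠ j` with `|⟪x_i, x_j⟫| = α` and a nonzero `d` orthogonal to the other `n - 1`
vectors. A point `c` of the open unit ball along `x_i ± x_j` saturates both measurements `i` and
`j` strictly, so every point `c + t • d` with small `t` has the same saturated measurements as `c`.
-/

open Set Metric Module Filter Topology

theorem csInf_eq_of_Ioi_subset_of_subset_Ici {α : Type*} [ConditionallyCompleteLinearOrder α]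
    [DenselyOrdered α] [NoMaxOrder α] {s : Set α} {a : α} (hIoi : Ioi a ⊆ s) (hIci : s ⊆ Ici a) :
    sInf s = a := by
  obtain ⟨b, hb⟩ := exists_gt a
  refine csInf_eq_of_forall_ge_of_forall_gt_exists_lt ⟨b, hIoi hb⟩ hIci fun w hw => ?_
  obtain ⟨c, hac, hcw⟩ := exists_between hw
  exact ⟨c, hIoi hac, hcw⟩

theorem satur_eq_satur_iff {l a b : ℝ} (hl : 0 < l) :
    satur l a = satur l b ↔ a = b ∨ ∃ e : ℝ, |e| = 1 ∧ l ≤ e * a ∧ l ≤ e * b := by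
  constructor
  · intro h
    by_cases hab : a = b
    · exact Or.inl hab
    right
    unfold satur at h
    rw [max_def, max_def, min_def, min_def] at h
    split_ifs at h <;>
    first
    | exact ⟨1, abs_one, by linarith, by linarith⟩
    | exact ⟨-1, by simp, by linarith, by linarith⟩
    | exact absurd (by linarith : a = b) hab
  · rintro (rfl | ⟨e, he, ha, hb⟩)
    · rfl
    rcases (abs_eq zero_le_one).1 he with rfl | rfl
    · rw [one_mul] at ha hb
      simp only [satur, min_eq_left ha, min_eq_left hb]
    · rw [neg_one_mul] at ha hb
      simp only [satur, min_eq_right (by linarith : a ≤ l), min_eq_right (by linarith : b ≤ l),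
        max_eq_left (by linarith : a ≤ -l), max_eq_left (by linarith : b ≤ -l)]

section InnerProductSpace

variable {E : Type*} [NormedAddCommGroup E] [InnerProductSpace ℝ E]

theorem norm_add_eq_two_mul_sqrt {u v : E} (hu : ‖u‖ = 1) (hv : ‖v‖ = 1) :
    ‖u + v‖ = 2 * √((1 + ⟪u, v⟫) / 2) := by
  have hsq := norm_add_sq_real u v
  rw [hu, hv] at hsq
  have hnonneg : 0 ≤ 1 + ⟪u, v⟫ := by nlinarith [sq_nonneg ‖u + v‖]
  rw [← sq_eq_sq₀ (norm_nonneg _) (by positivity), mul_pow, Real.sq_sqrt (by positivity), hsq]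
  ring

theorem le_sqrt_of_le_inner_of_le_inner {u v y : E} {α l : ℝ} (hu : ‖u‖ = 1) (hv : ‖v‖ = 1)
    (huv : ⟪u, v⟫ ≤ α) (hy : ‖y‖ ≤ 1) (hyu : l ≤ ⟪y, u⟫) (hyv : l ≤ ⟪y, v⟫) :
    l ≤ √((1 + α) / 2) := by
  have : 2 * l ≤ 2 * √((1 + α) / 2) := calc
    2 * l ≤ ⟪y, u + v⟫ := by rw [inner_add_right]; linarith
    _ ≤ ‖y‖ * ‖u + v‖ := real_inner_le_norm _ _
    _ ≤ ‖u + v‖ := mul_le_of_le_one_left (norm_nonneg _) hy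
    _ = 2 * √((1 + ⟪u, v⟫) / 2) := norm_add_eq_two_mul_sqrt hu hv
    _ ≤ 2 * √((1 + α) / 2) := by gcongr
  linarith

theorem exists_norm_lt_one_lt_inner {u v : E} (hu : ‖u‖ = 1) (hv : ‖v‖ = 1) {l : ℝ}
    (hl : 0 ≤ l) (hlt : l < √((1 + ⟪u, v⟫) / 2)) :
    ∃ c : E, ‖c‖ < 1 ∧ l < ⟪c, u⟫ ∧ l < ⟪c, v⟫ := by
  set μ := √((1 + ⟪u, v⟫) / 2)
  have hμ : 0 < μ := hl.trans_lt hlt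
  have hμsq : μ ^ 2 = (1 + ⟪u, v⟫) / 2 := Real.sq_sqrt (Real.sqrt_pos.1 hμ).le
  obtain ⟨r, hlr, hrμ⟩ := exists_between hlt
  have hr : 0 < r := hl.trans_lt hlr
  have hs : 0 < r / (2 * μ ^ 2) := by positivity
  have htwo : 1 + ⟪u, v⟫ = 2 * μ ^ 2 := by rw [hμsq]; ring
  have hself : ∀ w : E, ‖w‖ = 1 → ⟪w, w⟫ = 1 := fun w hw => by
    rw [real_inner_self_eq_norm_sq, hw, one_pow]
  refine ⟨(r / (2 * μ ^ 2)) • (u + v), ?_, ?_, ?_⟩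
  · rw [norm_smul, Real.norm_of_nonneg hs.le, norm_add_eq_two_mul_sqrt hu hv]
    change r / (2 * μ ^ 2) * (2 * μ) < 1
    rw [div_mul_eq_mul_div, div_lt_one (by positivity)]
    nlinarith
  · rw [real_inner_smul_left, inner_add_left, hself u hu, real_inner_comm, htwo,
      div_mul_cancel₀ _ (by positivity)]
    exact hlr
  · rw [real_inner_smul_left, inner_add_left, hself v hv, add_comm, htwo,
      div_mul_cancel₀ _ (by positivity)]
    exact hlr

theorem injOn_satur_of_sqrt_lt {ι : Type*} {x : ι → E} (hunit : ∀ k, ‖x k‖ = 1) {α : ℝ}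
    (hα : ∀ i j, i ≠ j → |⟪x i, x j⟫| ≤ α)
    (hsep : ∀ d : E, d ≠ 0 → ∃ i j, i ≠ j ∧ ⟪d, x i⟫ ≠ 0 ∧ ⟪d, x j⟫ ≠ 0) {l : ℝ}
    (hl : √((1 + α) / 2) < l) :
    InjOn (fun y k => satur l ⟪y, x k⟫) (closedBall (0 : E) 1) := by
  intro y hy z _ hyz
  by_contra hne
  have hl0 : 0 < l := (Real.sqrt_nonneg _).trans_lt hl
  obtain ⟨i, j, hij, hi, hj⟩ := hsep (y - z) (sub_ne_zero.2 hne)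
  have hsat : ∀ k, ⟪y - z, x k⟫ ≠ 0 → ∃ e : ℝ, |e| = 1 ∧ l ≤ ⟪y, e • x k⟫ := fun k hk => by
    obtain h | ⟨e, he, hey, -⟩ := (satur_eq_satur_iff hl0).1 (congrFun hyz k)
    · exact absurd (by rw [inner_sub_left, h, sub_self]) hk
    · exact ⟨e, he, by rwa [real_inner_smul_right]⟩
  have hnorm : ∀ {e : ℝ} (k), |e| = 1 → ‖e • x k‖ = 1 := fun k he => by
    rw [norm_smul, Real.norm_eq_abs, he, hunit, one_mul]
  obtain ⟨ei, hei, hyi⟩ := hsat i hi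
  obtain ⟨ej, hej, hyj⟩ := hsat j hj
  refine hl.not_ge (le_sqrt_of_le_inner_of_le_inner (hnorm i hei) (hnorm j hej) ?_
    (mem_closedBall_zero_iff.1 hy) hyi hyj)
  calc ⟪ei • x i, ej • x j⟫ = ei * (ej * ⟪x i, x j⟫) := by
        rw [real_inner_smul_left, real_inner_smul_right]
    _ ≤ |ei * (ej * ⟪x i, x j⟫)| := le_abs_self _
    _ = |⟪x i, x j⟫| := by rw [abs_mul, abs_mul, hei, hej, one_mul, one_mul]
    _ ≤ α := hα i j hij

theorem not_injOn_satur_of_lt_sqrt {ι : Type*} {x : ι → E} (hunit : ∀ k, ‖x k‖ = 1) {i j : ι}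
    {d : E} (hd : d ≠ 0) (hdx : ∀ k, k ≠ i → k ≠ j → ⟪d, x k⟫ = 0) {l : ℝ} (hl : 0 < l)
    (hlt : l < √((1 + |⟪x i, x j⟫|) / 2)) :
    ¬ InjOn (fun y k => satur l ⟪y, x k⟫) (closedBall (0 : E) 1) := by
  obtain ⟨ε, hε, hεij⟩ : ∃ ε : ℝ, |ε| = 1 ∧ ⟪x i, ε • x j⟫ = |⟪x i, x j⟫| := by
    simp only [real_inner_smul_right]
    rcases abs_choice ⟪x i, x j⟫ with h | h
    exacts [⟨1, abs_one, by rw [h, one_mul]⟩, ⟨-1, by simp, by rw [h, neg_one_mul]⟩]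
  have hv : ‖ε • x j‖ = 1 := by rw [norm_smul, Real.norm_eq_abs, hε, hunit, one_mul]
  obtain ⟨c, hc⟩ := exists_norm_lt_one_lt_inner (hunit i) hv hl.le (hεij ▸ hlt)
  set U := {y : E | ‖y‖ < 1 ∧ l < ⟪y, x i⟫ ∧ l < ⟪y, ε • x j⟫}
  have hU : IsOpen U :=
    (isOpen_lt continuous_norm continuous_const).and <|
      (isOpen_lt continuous_const (continuous_id.inner continuous_const)).and
      (isOpen_lt continuous_const (continuous_id.inner continuous_const))
  have hline : ∀ᶠ t in 𝓝[≠] (0 : ℝ), c + t • d ∈ U := by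
    refine nhdsWithin_le_nhds (ContinuousAt.preimage_mem_nhds ?_ ?_)
    · fun_prop
    · simpa using hU.mem_nhds hc
  obtain ⟨t, htU, ht⟩ := (hline.and self_mem_nhdsWithin).exists
  have hsat : ∀ {y z : E} {e : ℝ} (k : ι), |e| = 1 → l < ⟪y, e • x k⟫ → l < ⟪z, e • x k⟫ →
      satur l ⟪y, x k⟫ = satur l ⟪z, x k⟫ := fun k he hy hz => by
    rw [real_inner_smul_right] at hy hz
    exact (satur_eq_satur_iff hl).2 (Or.inr ⟨_, he, hy.le, hz.le⟩)
  intro hinj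
  have hq : c + t • d = c := by
    refine hinj (mem_closedBall_zero_iff.2 htU.1.le) (mem_closedBall_zero_iff.2 hc.1.le)
      (funext fun k => ?_)
    by_cases hki : k = i
    · subst hki
      exact hsat k abs_one (by simpa using htU.2.1) (by simpa using hc.2.1)
    by_cases hkj : k = j
    · subst hkj
      exact hsat k hε htU.2.2 hc.2.2
    simp only [inner_add_left, real_inner_smul_left, hdx k hki hkj, mul_zero, add_zero]
  exact smul_ne_zero ht hd (by simpa using hq)

end InnerProductSpace

def IsFullSpark (K : Type*) {E ι : Type*} [Field K] [AddCommGroup E] [Module K E] (x : ι → E) :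
    Prop :=
  ∀ s : Finset ι, s.card = finrank K E → LinearIndependent K (fun k : s => x k)

section FiniteDimensional

variable {E ι : Type*} [NormedAddCommGroup E] [InnerProductSpace ℝ E] [FiniteDimensional ℝ E]

theorem IsFullSpark.eq_zero_of_inner_eq_zero {x : ι → E} (hx : IsFullSpark ℝ x) {s : Finset ι}
    (hs : finrank ℝ E ≤ s.card) {d : E} (hd : ∀ k ∈ s, ⟪d, x k⟫ = 0) : d = 0 := by
  obtain ⟨t, hts, ht⟩ := Finset.exists_subset_card_eq hs
  refine InnerProductSpace.ext_inner_left_basis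
    (basisOfLinearIndependentOfCardEqFinrank' _ (hx t ht) (by simpa using ht)) fun k => ?_
  simp [real_inner_comm, hd k (hts k.2)]

theorem IsFullSpark.exists_ne_inner_ne_zero [Fintype ι] {x : ι → E} (hx : IsFullSpark ℝ x)
    (hcard : finrank ℝ E < Fintype.card ι) {d : E} (hd : d ≠ 0) :
    ∃ i j, i ≠ j ∧ ⟪d, x i⟫ ≠ 0 ∧ ⟪d, x j⟫ ≠ 0 := by
  classical
  by_contra! h
  have hsupp : (Finset.univ.filter fun k => ¬⟪d, x k⟫ = 0).card ≤ 1 :=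
    Finset.card_le_one.2 fun i hi j hj => by
      by_contra hij
      exact (Finset.mem_filter.1 hj).2 (h i j hij (Finset.mem_filter.1 hi).2)
  refine hd (hx.eq_zero_of_inner_eq_zero (s := Finset.univ.filter fun k => ⟪d, x k⟫ = 0) ?_
    fun k hk => (Finset.mem_filter.1 hk).2)
  have := Finset.card_filter_add_card_filter_not (s := Finset.univ) fun k => ⟪d, x k⟫ = 0
  rw [Finset.card_univ] at this
  omega

theorem exists_ne_zero_forall_inner_eq_zero (x : ι → E) {s : Finset ι}
    (hs : s.card < finrank ℝ E) : ∃ d : E, d ≠ 0 ∧ ∀ k ∈ s, ⟪d, x k⟫ = 0 := by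
  have hK : Submodule.span ℝ (range fun k : s => x k) ≠ ⊤ := fun h => by
    have := finrank_range_le_card (R := ℝ) fun k : s => x k
    rw [Set.finrank, h, finrank_top, Fintype.card_coe] at this
    omega
  obtain ⟨d, hdK, hd⟩ := (Submodule.ne_bot_iff _).1 (mt Submodule.orthogonal_eq_bot_iff.1 hK)
  refine ⟨d, hd, fun k hk => Submodule.inner_left_of_mem_orthogonal ?_ hdK⟩
  exact Submodule.subset_span (mem_range_self (⟨k, hk⟩ : s))

end FiniteDimensional

theorem critical_level_of_full_spark_n_plus_one_unit_vectors
    {n : ℕ} (xv : Fin (n + 1) → EuclideanSpace ℝ (Fin n))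
    (hunit : ∀ j, ‖xv j‖ = 1)
    (hfs : ∀ s : Finset (Fin (n + 1)), s.card = n →
      LinearIndependent ℝ (fun j : {j // j ∈ s} => xv j.1))
    (α : ℝ)
    (hα : IsGreatest {t : ℝ | ∃ i j : Fin (n + 1), i ≠ j ∧ t = |⟪xv i, xv j⟫|} α)
    (lamc : ℝ)
    (hlamc : lamc = sInf {l : ℝ | 0 < l ∧ Set.InjOn
      (fun x : EuclideanSpace ℝ (Fin n) => fun j : Fin (n + 1) => satur l ⟪x, xv j⟫)
      (Metric.closedBall 0 1)}) :
    lamc = Real.sqrt ((1 + α) / 2) := by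
  obtain ⟨⟨i, j, hij, rfl⟩, hα⟩ := hα
  have hdim : finrank ℝ (EuclideanSpace ℝ (Fin n)) = n := finrank_euclideanSpace_fin
  have hfull : IsFullSpark ℝ xv := fun s hs => hfs s (hs.trans hdim)
  subst hlamc
  refine csInf_eq_of_Ioi_subset_of_subset_Ici (fun l hl => ⟨(Real.sqrt_nonneg _).trans_lt hl,
    injOn_satur_of_sqrt_lt hunit (fun i j hij => hα ⟨i, j, hij, rfl⟩)
      (fun d hd => hfull.exists_ne_inner_ne_zero (by simp [hdim]) hd) hl⟩) ?_
  rintro l ⟨hl, hinj⟩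
  refine mem_Ici.2 (le_of_not_gt fun hlt => ?_)
  have hn : 2 ≤ n + 1 := Fin.nontrivial_iff_two_le.1 (nontrivial_of_ne i j hij)
  obtain ⟨d, hd, hdx⟩ := exists_ne_zero_forall_inner_eq_zero xv (s := {i, j}ᶜ) (by
    rw [Finset.card_compl, Finset.card_pair hij, Fintype.card_fin, hdim]
    omega)
  exact not_injOn_satur_of_lt_sqrt hunit hd (fun k hki hkj => hdx k (by simp [hki, hkj])) hl hlt
    hinj
end
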